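/- Let L denote the Rogers dilogarithm. For every real s with 0 < s < 1, one has L(s) + L(s²) − L(s³) = L(s²/(s² + s + 1)) + L(s·(s + 1)/(s² + s + 1)). -/

import Mathlib

open Real Filter Set Topology

/-- The real dilogarithm `Li₂(z) = ∑_{n=1}^∞ zⁿ/n²`. -/
noncomputable def dilog (z : ℝ) : ℝ := ∑' n : ℕ, z ^ (n + 1) / ((n : ℝ) + 1) ^ 2

/-- The (non-normalized) Rogers dilogarithm `L(z) = Li₂(z) + (1/2) log z log (1 - z)`. -/
noncomputable def rogersL (z : ℝ) : ℝ := dilog z + 1 / 2 * Real.log z * Real.log (1 - z)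

lemma summable_dilog {z : ℝ} (h : |z| < 1) :
    Summable (fun n : ℕ => z ^ (n + 1) / ((n : ℝ) + 1) ^ 2) := by
  refine Summable.of_norm_bounded (summable_geometric_of_lt_one (abs_nonneg z) h) fun n => ?_
  rw [norm_eq_abs, abs_div, ← pow_abs]
  have h1 : (1:ℝ) ≤ |((n:ℝ)+1)^2| := by
    rw [abs_of_nonneg (by positivity : (0:ℝ) ≤ ((n:ℝ)+1)^2)]
    nlinarith [Nat.cast_nonneg (α := ℝ) n]
  calc |z|^(n+1) / |((n:ℝ)+1)^2| ≤ |z|^(n+1) / 1 := by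
        gcongr
    _ ≤ |z|^n := by
        rw [div_one, pow_succ]
        exact mul_le_of_le_one_right (pow_nonneg (abs_nonneg z) n) h.le

lemma hasDerivAt_dilog {x : ℝ} (h0 : 0 < x) (h1 : x < 1) :
    HasDerivAt dilog (-Real.log (1 - x) / x) x := by
  set r : ℝ := (x + 1) / 2 with hr
  have hxr : x < r := by rw [hr]; linarith
  have hr0 : 0 < r := by rw [hr]; linarith
  have hr1 : r < 1 := by rw [hr]; linarith
  have key : HasDerivAt (fun z => ∑' n : ℕ, z ^ (n + 1) / ((n : ℝ) + 1) ^ 2)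
      (∑' n : ℕ, x ^ n / ((n : ℝ) + 1)) x := by
    refine hasDerivAt_tsum_of_isPreconnected (u := fun n : ℕ => r ^ n)
      (g' := fun n y => y ^ n / ((n : ℝ) + 1))
      (summable_geometric_of_lt_one hr0.le hr1) (isOpen_Ioo (a := -r) (b := r))
      (convex_Ioo _ _).isPreconnected (fun n y _ => ?_) (fun n y hy => ?_)
      (y₀ := 0) (by constructor <;> linarith) ?_ (by constructor <;> linarith)
    · have h := (hasDerivAt_pow (n + 1) y).div_const (((n : ℝ) + 1) ^ 2)
      refine h.congr_deriv ?_
      push_cast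
      have : ((n:ℝ)+1) ≠ 0 := by positivity
      field_simp
    · rw [norm_eq_abs, abs_div, ← pow_abs, abs_of_nonneg (by positivity : (0:ℝ) ≤ (n:ℝ)+1)]
      have hn : (1:ℝ) ≤ (n:ℝ)+1 := by nlinarith [Nat.cast_nonneg (α := ℝ) n]
      have hy' : |y| ≤ r := by
        rcases hy with ⟨hy1, hy2⟩
        rw [abs_le]; constructor <;> linarith
      calc |y|^n / ((n:ℝ)+1) ≤ |y|^n / 1 := by gcongr
        _ = |y|^n := div_one _
        _ ≤ r^n := pow_le_pow_left₀ (abs_nonneg y) hy' n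
    · simp only [zero_pow (Nat.succ_ne_zero _), zero_div]
      exact summable_zero
  have hsum : HasSum (fun n : ℕ => x ^ n / ((n : ℝ) + 1)) (-Real.log (1 - x) / x) := by
    have h := hasSum_pow_div_log_of_abs_lt_one (x := x) (by rw [abs_of_pos h0]; exact h1)
    have h2 := h.div_const x
    have he : (fun n : ℕ => x ^ (n + 1) / ((n:ℝ) + 1) / x) = fun n : ℕ => x ^ n / ((n : ℝ) + 1) := by
      funext n
      have : ((n:ℝ)+1) ≠ 0 := by positivity
      field_simp
      ring
    rwa [he] at h2
  rw [hsum.tsum_eq] at key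
  exact key

lemma hasDerivAt_rogersL {x : ℝ} (h0 : 0 < x) (h1 : x < 1) :
    HasDerivAt rogersL
      (-(1 / 2) * (Real.log (1 - x) / x + Real.log x / (1 - x))) x := by
  have hx1 : (0:ℝ) < 1 - x := by linarith
  have hd := hasDerivAt_dilog h0 h1
  have hlog1 : HasDerivAt Real.log x⁻¹ x := Real.hasDerivAt_log h0.ne'
  have hsub : HasDerivAt (fun y : ℝ => 1 - y) (-1) x := (hasDerivAt_id x).const_sub 1
  have hlog2 : HasDerivAt (fun y : ℝ => Real.log (1 - y)) (-(1 - x)⁻¹) x := by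
    have h := (Real.hasDerivAt_log hx1.ne').comp x hsub
    exact h.congr_deriv (by ring)
  have hmul : HasDerivAt (fun y : ℝ => 1 / 2 * Real.log y * Real.log (1 - y))
      ((1 / 2 * x⁻¹) * Real.log (1 - x) + (1 / 2 * Real.log x) * (-(1 - x)⁻¹)) x :=
    (hlog1.const_mul (1/2)).mul hlog2
  have h := hd.add hmul
  have : HasDerivAt (fun z => dilog z + 1 / 2 * Real.log z * Real.log (1 - z))
      (-(1 / 2) * (Real.log (1 - x) / x + Real.log x / (1 - x))) x := by
    exact h.congr_deriv (by ring)
  exact this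

lemma dilog_nonneg {z : ℝ} (h0 : 0 ≤ z) (h1 : z < 1) : 0 ≤ dilog z :=
  tsum_nonneg fun n => by positivity

lemma dilog_le {z : ℝ} (h0 : 0 ≤ z) (h1 : z < 1) : dilog z ≤ z / (1 - z) := by
  have habs : |z| < 1 := by rw [abs_of_nonneg h0]; exact h1
  have hs1 : Summable (fun n : ℕ => z ^ (n + 1) / ((n : ℝ) + 1) ^ 2) := summable_dilog habs
  have hs2 : Summable (fun n : ℕ => z ^ (n + 1)) := by
    have := (summable_geometric_of_lt_one h0 h1).mul_left z
    simpa [pow_succ, mul_comm] using this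
  have hle : dilog z ≤ ∑' n : ℕ, z ^ (n + 1) := by
    refine Summable.tsum_le_tsum (fun n => ?_) hs1 hs2
    have hn : (1:ℝ) ≤ ((n:ℝ)+1)^2 := by nlinarith [Nat.cast_nonneg (α := ℝ) n]
    calc z ^ (n+1) / ((n:ℝ)+1)^2 ≤ z ^ (n+1) / 1 := by gcongr
      _ = z ^ (n+1) := div_one _
  refine hle.trans ?_
  have : ∑' n : ℕ, z ^ (n + 1) = z * ∑' n : ℕ, z ^ n := by
    rw [← tsum_mul_left]
    congr 1; funext n; rw [pow_succ, mul_comm]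
  rw [this, tsum_geometric_of_lt_one h0 h1]
  rw [div_eq_mul_inv]

lemma tendsto_dilog_zero : Tendsto dilog (𝓝[>] (0:ℝ)) (𝓝 0) := by
  have hev : ∀ᶠ z in 𝓝[>] (0:ℝ), z ∈ Ioo (0:ℝ) 1 := Ioo_mem_nhdsGT_of_mem (by norm_num)
  have hbound : Tendsto (fun z : ℝ => z / (1 - z)) (𝓝[>] (0:ℝ)) (𝓝 0) := by
    have : ContinuousAt (fun z : ℝ => z / (1 - z)) 0 := by
      apply ContinuousAt.div
      · exact continuousAt_id
      · fun_prop
      · norm_num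
    have h := this.tendsto
    simp only [sub_zero, div_one, zero_div] at h
    exact h.mono_left nhdsWithin_le_nhds
  refine squeeze_zero' ?_ ?_ hbound
  · filter_upwards [hev] with z hz
    exact dilog_nonneg hz.1.le hz.2
  · filter_upwards [hev] with z hz
    exact dilog_le hz.1.le hz.2

lemma tendsto_logpart_zero :
    Tendsto (fun z : ℝ => 1 / 2 * Real.log z * Real.log (1 - z)) (𝓝[>] (0:ℝ)) (𝓝 0) := by
  have h1 : Tendsto (fun z : ℝ => z * Real.log z) (𝓝[>] (0:ℝ)) (𝓝 0) := by
    have := Real.continuous_mul_log.tendsto 0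
    simp only [Real.log_zero, mul_zero, zero_mul] at this
    exact this.mono_left nhdsWithin_le_nhds
  have h2 : Tendsto (fun z : ℝ => Real.log (1 - z) / z) (𝓝[>] (0:ℝ)) (𝓝 (-1)) := by
    have hder : HasDerivAt (fun y : ℝ => Real.log (1 - y)) (-1) 0 := by
      have hsub : HasDerivAt (fun y : ℝ => 1 - y) (-1) 0 := (hasDerivAt_id 0).const_sub 1
      have h := (Real.hasDerivAt_log (by norm_num : (1:ℝ) - 0 ≠ 0)).comp 0 hsub
      exact h.congr_deriv (by norm_num)
    have hslope := hasDerivAt_iff_tendsto_slope.mp hder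
    have : Tendsto (slope (fun y : ℝ => Real.log (1 - y)) 0) (𝓝[>] (0:ℝ)) (𝓝 (-1)) :=
      hslope.mono_left (nhdsWithin_mono 0 fun y hy => ne_of_gt hy)
    refine this.congr' ?_
    filter_upwards [self_mem_nhdsWithin] with z hz
    simp [slope_def_field]
  have hmain : Tendsto (fun z : ℝ => 1 / 2 * ((z * Real.log z) * (Real.log (1 - z) / z)))
      (𝓝[>] (0:ℝ)) (𝓝 0) := by
    have := (h1.mul h2).const_mul (1/2 : ℝ)
    simpa using this
  refine hmain.congr' ?_
  filter_upwards [self_mem_nhdsWithin] with z hz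
  have hz' : z ≠ 0 := ne_of_gt hz
  field_simp

lemma tendsto_rogersL_zero : Tendsto rogersL (𝓝[>] (0:ℝ)) (𝓝 0) := by
  have h := tendsto_dilog_zero.add tendsto_logpart_zero
  have h2 : rogersL = fun z => dilog z + 1 / 2 * Real.log z * Real.log (1 - z) := rfl
  rw [h2]
  simpa using h

noncomputable def Lp (z : ℝ) : ℝ := -(1 / 2) * (Real.log (1 - z) / z + Real.log z / (1 - z))

lemma hasDerivAt_rogersL' {x : ℝ} (h0 : 0 < x) (h1 : x < 1) :
    HasDerivAt rogersL (Lp x) x := hasDerivAt_rogersL h0 h1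

/-- A Kirillov-style relation: `L(s) + L(s²) − L(s³) = L(s²/(s²+s+1)) + L(s(s+1)/(s²+s+1))`. -/
theorem kirillov_relation (s : ℝ) (h0 : 0 < s) (h1 : s < 1) :
    rogersL s + rogersL (s ^ 2) - rogersL (s ^ 3) =
      rogersL (s ^ 2 / (s ^ 2 + s + 1)) +
        rogersL (s * (s + 1) / (s ^ 2 + s + 1)) := by
  set F : ℝ → ℝ := fun t => rogersL t + rogersL (t ^ 2) - rogersL (t ^ 3)
      - rogersL (t ^ 2 / (t ^ 2 + t + 1)) - rogersL (t * (t + 1) / (t ^ 2 + t + 1)) with hF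
  suffices h : F s = 0 by
    rw [hF] at h
    simp only at h
    linarith
  have key : ∀ t ∈ Ioo (0:ℝ) 1, HasDerivAt F 0 t := by
    intro t ht
    obtain ⟨ht0, ht1⟩ := ht
    have hq : (0:ℝ) < t ^ 2 + t + 1 := by nlinarith
    have hq' : t ^ 2 + t + 1 ≠ 0 := hq.ne'
    have h2 : t ^ 2 ∈ Ioo (0:ℝ) 1 := ⟨by positivity, by nlinarith⟩
    have h3 : t ^ 3 ∈ Ioo (0:ℝ) 1 := ⟨by positivity, by nlinarith⟩
    have hdm : t ^ 2 / (t ^ 2 + t + 1) ∈ Ioo (0:ℝ) 1 :=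
      ⟨by positivity, by rw [div_lt_one hq]; nlinarith⟩
    have hem : t * (t + 1) / (t ^ 2 + t + 1) ∈ Ioo (0:ℝ) 1 :=
      ⟨by positivity, by rw [div_lt_one hq]; nlinarith⟩
    have hp2 : HasDerivAt (fun x : ℝ => x ^ 2) (2 * t) t := by
      simpa using hasDerivAt_pow 2 t
    have hp3 : HasDerivAt (fun x : ℝ => x ^ 3) (3 * t ^ 2) t := by
      simpa using hasDerivAt_pow 3 t
    have hden : HasDerivAt (fun x : ℝ => x ^ 2 + x + 1) (2 * t + 1) t := by
      simpa using (hp2.add (hasDerivAt_id t)).add_const 1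
    have hnum : HasDerivAt (fun x : ℝ => x * (x + 1)) (1 * (t + 1) + t * 1) t :=
      (hasDerivAt_id t).mul ((hasDerivAt_id t).add_const 1)
    have hA : HasDerivAt rogersL (Lp t) t := hasDerivAt_rogersL' ht0 ht1
    have hB : HasDerivAt (fun x : ℝ => rogersL (x ^ 2)) (Lp (t ^ 2) * (2 * t)) t :=
      HasDerivAt.comp (h₂ := rogersL) (h := fun x : ℝ => x ^ 2) t
        (hasDerivAt_rogersL' h2.1 h2.2) hp2
    have hC : HasDerivAt (fun x : ℝ => rogersL (x ^ 3)) (Lp (t ^ 3) * (3 * t ^ 2)) t :=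
      HasDerivAt.comp (h₂ := rogersL) (h := fun x : ℝ => x ^ 3) t
        (hasDerivAt_rogersL' h3.1 h3.2) hp3
    have hu : HasDerivAt (fun x : ℝ => x ^ 2 / (x ^ 2 + x + 1))
        ((2 * t * (t ^ 2 + t + 1) - t ^ 2 * (2 * t + 1)) / (t ^ 2 + t + 1) ^ 2) t :=
      hp2.div hden hq'
    have hv : HasDerivAt (fun x : ℝ => x * (x + 1) / (x ^ 2 + x + 1))
        (((1 * (t + 1) + t * 1) * (t ^ 2 + t + 1) - t * (t + 1) * (2 * t + 1)) /
          (t ^ 2 + t + 1) ^ 2) t :=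
      hnum.div hden hq'
    have hD : HasDerivAt (fun x : ℝ => rogersL (x ^ 2 / (x ^ 2 + x + 1)))
        (Lp (t ^ 2 / (t ^ 2 + t + 1)) *
          ((2 * t * (t ^ 2 + t + 1) - t ^ 2 * (2 * t + 1)) / (t ^ 2 + t + 1) ^ 2)) t :=
      HasDerivAt.comp (h₂ := rogersL) (h := fun x : ℝ => x ^ 2 / (x ^ 2 + x + 1)) t
        (hasDerivAt_rogersL' hdm.1 hdm.2) hu
    have hE : HasDerivAt (fun x : ℝ => rogersL (x * (x + 1) / (x ^ 2 + x + 1)))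
        (Lp (t * (t + 1) / (t ^ 2 + t + 1)) *
          (((1 * (t + 1) + t * 1) * (t ^ 2 + t + 1) - t * (t + 1) * (2 * t + 1)) /
            (t ^ 2 + t + 1) ^ 2)) t :=
      HasDerivAt.comp (h₂ := rogersL) (h := fun x : ℝ => x * (x + 1) / (x ^ 2 + x + 1)) t
        (hasDerivAt_rogersL' hem.1 hem.2) hv
    have htot := (((hA.add hB).sub hC).sub hD).sub hE
    rw [hF]
    refine htot.congr_deriv ?_
    -- derivative is zero: a logarithmic identity
    have ht0' : t ≠ 0 := ht0.ne'
    have h1t : (1:ℝ) - t ≠ 0 := by linarith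
    have ht1' : t + 1 ≠ 0 := by linarith
    simp only [Lp]
    rw [show (1:ℝ) - t ^ 2 / (t ^ 2 + t + 1) = (t + 1) / (t ^ 2 + t + 1) by field_simp; ring,
      show (1:ℝ) - t * (t + 1) / (t ^ 2 + t + 1) = 1 / (t ^ 2 + t + 1) by field_simp; ring,
      show (1:ℝ) - t ^ 2 = (1 - t) * (t + 1) by ring,
      show (1:ℝ) - t ^ 3 = (1 - t) * (t ^ 2 + t + 1) by ring,
      Real.log_div (pow_ne_zero 2 ht0') hq', Real.log_div ht1' hq',
      Real.log_div (mul_ne_zero ht0' ht1') hq',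
      Real.log_mul h1t ht1', Real.log_mul h1t hq', Real.log_mul ht0' ht1',
      Real.log_pow, Real.log_pow, Real.log_div one_ne_zero hq', Real.log_one]
    push_cast
    field_simp
    ring
  -- F is constant on Ioo 0 1
  have hconst : ∀ a : ℝ, a ∈ Ioo (0:ℝ) 1 → ∀ b : ℝ, b ∈ Ioo (0:ℝ) 1 → a ≤ b → F b = F a := by
    intro a ha b hb hab
    have hsub : Icc a b ⊆ Ioo (0:ℝ) 1 := fun x hx =>
      ⟨lt_of_lt_of_le ha.1 hx.1, lt_of_le_of_lt hx.2 hb.2⟩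
    have hdiff : DifferentiableOn ℝ F (Icc a b) := fun x hx =>
      ((key x (hsub hx)).differentiableAt).differentiableWithinAt
    have hderiv : ∀ x ∈ Ico a b, derivWithin F (Icc a b) x = 0 := by
      intro x hx
      have hlt : a < b := lt_of_le_of_lt hx.1 hx.2
      have h := (key x (hsub ⟨hx.1, hx.2.le⟩)).hasDerivWithinAt (s := Icc a b)
      exact h.derivWithin (uniqueDiffOn_Icc hlt x ⟨hx.1, hx.2.le⟩)
    exact constant_of_derivWithin_zero hdiff hderiv b ⟨hab, le_refl b⟩
  have hs : s ∈ Ioo (0:ℝ) 1 := ⟨h0, h1⟩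
  -- limit of F at 0⁺ is 0
  have hcomp : ∀ g : ℝ → ℝ, ContinuousAt g 0 → g 0 = 0 → (∀ t, 0 < t → t < 1 → 0 < g t) →
      Tendsto (fun t => rogersL (g t)) (𝓝[>] (0:ℝ)) (𝓝 0) := by
    intro g hg hg0 hgpos
    refine tendsto_rogersL_zero.comp ?_
    rw [tendsto_nhdsWithin_iff]
    constructor
    · have := hg.tendsto.mono_left (nhdsWithin_le_nhds (s := Ioi (0:ℝ)))
      rwa [hg0] at this
    · filter_upwards [Ioo_mem_nhdsGT_of_mem (show (0:ℝ) ∈ Ico (0:ℝ) 1 by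
        constructor <;> norm_num)] with t ht
      exact hgpos t ht.1 ht.2
  have l1 : Tendsto (fun t : ℝ => rogersL t) (𝓝[>] (0:ℝ)) (𝓝 0) :=
    tendsto_rogersL_zero
  have l2 : Tendsto (fun t : ℝ => rogersL (t ^ 2)) (𝓝[>] (0:ℝ)) (𝓝 0) :=
    hcomp _ (by fun_prop) (by norm_num) (fun t ht _ => by positivity)
  have l3 : Tendsto (fun t : ℝ => rogersL (t ^ 3)) (𝓝[>] (0:ℝ)) (𝓝 0) :=
    hcomp _ (by fun_prop) (by norm_num) (fun t ht _ => by positivity)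
  have l4 : Tendsto (fun t : ℝ => rogersL (t ^ 2 / (t ^ 2 + t + 1))) (𝓝[>] (0:ℝ)) (𝓝 0) := by
    refine hcomp _ ?_ (by norm_num) (fun t ht _ => by positivity)
    exact ContinuousAt.div (by fun_prop) (by fun_prop) (by norm_num)
  have l5 : Tendsto (fun t : ℝ => rogersL (t * (t + 1) / (t ^ 2 + t + 1))) (𝓝[>] (0:ℝ)) (𝓝 0) := by
    refine hcomp _ ?_ (by norm_num) (fun t ht _ => by positivity)
    exact ContinuousAt.div (by fun_prop) (by fun_prop) (by norm_num)
  have hlim : Tendsto F (𝓝[>] (0:ℝ)) (𝓝 0) := by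
    rw [hF]
    have := (((l1.add l2).sub l3).sub l4).sub l5
    simpa using this
  have hlim2 : Tendsto F (𝓝[>] (0:ℝ)) (𝓝 (F s)) := by
    refine Tendsto.congr' ?_ tendsto_const_nhds
    filter_upwards [Ioo_mem_nhdsGT_of_mem (show (0:ℝ) ∈ Ico (0:ℝ) 1 by
      constructor <;> norm_num)] with t ht
    rcases le_total t s with h | h
    · exact hconst t ht s hs h
    · exact (hconst s hs t ht h).symm
  exact tendsto_nhds_unique hlim2 hlim
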